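/- In any dGBV algebra (g, ∘, d, Δ), for every even nilpotent element S ∈ g₀ (say S^N = 0) one has the identity (d + Δ)(e^S) = (d(S) + Δ(S) + ½ [S • S]) ∘ e^S, where e^S := Σ_{r=0}^{N−1} S^r / r! (a finite sum of ∘-powers). -/

import Mathlib

/-- A differential Gerstenhaber–Batalin–Vilkovisky (dGBV) algebra over a field `k` of
characteristic zero: a `ℤ/2`-graded unital associative supercommutative algebra `A`
equipped with two odd operators `d` and `delta` (usually written `Δ`) satisfying
`d² = 0`, `Δ² = 0`, `dΔ + Δd = 0`, `d` an odd derivation and `Δ` of order two. -/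
structure DGBV (k A : Type*) [Field k] [CharZero k] [Ring A] [Algebra k A] where
  grading : ZMod 2 → Submodule k A
  graded : GradedAlgebra grading
  supercomm : ∀ (i j : ZMod 2), ∀ a ∈ grading i, ∀ b ∈ grading j,
    a * b = ((-1 : k) ^ (i.val * j.val)) • (b * a)
  d : A →ₗ[k] A
  delta : A →ₗ[k] A
  d_odd : ∀ (i : ZMod 2), ∀ a ∈ grading i, d a ∈ grading (i + 1)
  delta_odd : ∀ (i : ZMod 2), ∀ a ∈ grading i, delta a ∈ grading (i + 1)
  d_deriv : ∀ (i : ZMod 2), ∀ a ∈ grading i, ∀ b : A,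
    d (a * b) = d a * b + ((-1 : k) ^ i.val) • (a * d b)
  d_sq : ∀ a : A, d (d a) = 0
  delta_sq : ∀ a : A, delta (delta a) = 0
  d_delta : ∀ a : A, d (delta a) + delta (d a) = 0
  order_two : ∀ (i j l : ZMod 2), ∀ a ∈ grading i, ∀ b ∈ grading j, ∀ c ∈ grading l,
    delta (a * b * c) = delta (a * b) * c
      + ((-1 : k) ^ (j.val * (i.val + 1))) • (b * delta (a * c))
      + ((-1 : k) ^ i.val) • (a * delta (b * c))
      - delta a * (b * c)
      - ((-1 : k) ^ i.val) • (a * (delta b * c))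
      - ((-1 : k) ^ (i.val + j.val)) • (a * b * delta c)

/-- The odd bracket `[a • b] := (−1)^{|a|} Δ(a∘b) − (−1)^{|a|} Δ(a)∘b − a∘Δ(b)`, where
`pa` is the parity of the (homogeneous) element `a`. -/
def DGBV.br {k A : Type*} [Field k] [CharZero k] [Ring A] [Algebra k A]
    (S : DGBV k A) (pa : ℕ) (a b : A) : A :=
  ((-1 : k) ^ pa) • S.delta (a * b) - ((-1 : k) ^ pa) • (S.delta a * b) - a * S.delta b

/-!
An even element `x` is central, so `d` acts on its powers as an ordinary derivation, and the
order-two axiom makes `[x • -]` a derivation on even elements. Hence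
`d (xⁿ) = n xⁿ⁻¹ dx` and `Δ (xⁿ) = n xⁿ⁻¹ Δx + (n choose 2) xⁿ⁻² [x • x]`; dividing by `n!`, the
truncated exponentials `Eₙ = ∑_{r<n} xʳ/r!` satisfy `d E_{n+1} = Eₙ dx` and
`Δ E_{n+2} = E_{n+1} Δx + ½ Eₙ [x • x]`. When `x ^ N = 0` all of `E_N, E_{N+1}, E_{N+2}` agree.
-/

open Finset

noncomputable def truncExp (k : Type*) {A : Type*} [Field k] [Ring A] [Algebra k A]
    (x : A) (n : ℕ) : A :=
  ∑ r ∈ range n, (r.factorial : k)⁻¹ • x ^ r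

section truncExp

variable {k A : Type*} [Field k] [Ring A] [Algebra k A] {x : A}

theorem truncExp_succ (n : ℕ) :
    truncExp k x (n + 1) = truncExp k x n + (n.factorial : k)⁻¹ • x ^ n :=
  sum_range_succ _ n

theorem truncExp_eq_of_pow_eq_zero {N n : ℕ} (hN : x ^ N = 0) (hn : N ≤ n) :
    truncExp k x n = truncExp k x N := by
  induction n, hn using Nat.le_induction with
  | base => rfl
  | succ n hNn ih => rw [truncExp_succ, ih, pow_eq_zero_of_le hNn hN, smul_zero, add_zero]

theorem Commute.truncExp_left {b : A} (h : Commute x b) (n : ℕ) :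
    Commute (truncExp k x n) b :=
  Commute.sum_left _ _ _ fun r _ => (h.pow_left r).smul_left _

end truncExp

section factorial

variable {k : Type*} [Field k] [CharZero k]

theorem inv_factorial_succ_mul (n : ℕ) :
    ((n + 1).factorial : k)⁻¹ * ((n + 1 : ℕ) : k) = (n.factorial : k)⁻¹ := by
  rw [Nat.factorial_succ, Nat.cast_mul, mul_inv, mul_comm, ← mul_assoc,
    mul_inv_cancel₀ (Nat.cast_ne_zero.mpr n.succ_ne_zero), one_mul]

theorem inv_factorial_add_two_mul_choose_two (n : ℕ) :
    ((n + 2).factorial : k)⁻¹ * ((n + 2).choose 2 : k) = 2⁻¹ * (n.factorial : k)⁻¹ := by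
  have hc : ((n + 2).choose 2 : k) ≠ 0 := Nat.cast_ne_zero.mpr (Nat.choose_pos (by omega)).ne'
  rw [← Nat.add_choose_mul_factorial_mul_factorial n 2]
  push_cast [Nat.factorial_two]
  field_simp

end factorial

namespace DGBV

variable {k A : Type*} [Field k] [CharZero k] [Ring A] [Algebra k A] (S : DGBV k A)

theorem one_mem_zero : (1 : A) ∈ S.grading 0 :=
  let _ := S.graded
  SetLike.one_mem_graded S.grading

theorem pow_mem_zero {x : A} (hx : x ∈ S.grading 0) (n : ℕ) : x ^ n ∈ S.grading 0 := by
  let _ := S.graded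
  simpa using SetLike.pow_mem_graded n hx

theorem commute_of_mem_zero {x : A} (hx : x ∈ S.grading 0) (b : A) : Commute x b := by
  let _ := S.graded
  induction b using DirectSum.Decomposition.inductionOn S.grading with
  | zero => exact Commute.zero_right x
  | @homogeneous j b => simpa [Commute, SemiconjBy] using S.supercomm 0 j x hx b b.2
  | add b b' hb hb' => exact hb.add_right hb'

theorem d_one : S.d 1 = 0 := by
  simpa using S.d_deriv 0 1 S.one_mem_zero 1

theorem delta_one : S.delta 1 = 0 := by
  have h1 := S.one_mem_zero
  simpa using S.order_two 0 0 0 1 h1 1 h1 1 h1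

theorem d_mul_of_mem_zero {x : A} (hx : x ∈ S.grading 0) (b : A) :
    S.d (x * b) = S.d x * b + x * S.d b := by
  simpa using S.d_deriv 0 x hx b

theorem delta_mul (a b : A) : S.delta (a * b) = S.delta a * b + a * S.delta b + S.br 0 a b := by
  simp only [br, pow_zero, one_smul]
  abel

theorem br_mul_of_mem_zero {x y z : A} {l : ZMod 2} (hx : x ∈ S.grading 0)
    (hy : y ∈ S.grading 0) (hz : z ∈ S.grading l) :
    S.br 0 x (y * z) = S.br 0 x y * z + y * S.br 0 x z := by
  have h := S.order_two 0 0 l x hx y hy z hz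
  simp only [ZMod.val_zero, zero_mul, zero_add, pow_zero, one_smul, add_zero] at h
  simp only [br, pow_zero, one_smul, ← mul_assoc, h, mul_sub, sub_mul,
    (S.commute_of_mem_zero hy (S.delta x)).eq, (S.commute_of_mem_zero hy x).eq]
  abel

theorem d_pow_succ {x : A} (hx : x ∈ S.grading 0) (n : ℕ) :
    S.d (x ^ (n + 1)) = ((n + 1 : ℕ) : k) • (x ^ n * S.d x) := by
  induction n with
  | zero => simp
  | succ n ih =>
    rw [pow_succ' x (n + 1), S.d_mul_of_mem_zero hx, ih, mul_smul_comm, ← mul_assoc, ← pow_succ',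
      ← ((S.commute_of_mem_zero hx (S.d x)).pow_left (n + 1)).eq]
    match_scalars
    ring

theorem br_pow_succ {x : A} (hx : x ∈ S.grading 0) (n : ℕ) :
    S.br 0 x (x ^ (n + 1)) = ((n + 1 : ℕ) : k) • (x ^ n * S.br 0 x x) := by
  induction n with
  | zero => simp
  | succ n ih =>
    rw [pow_succ' x (n + 1), S.br_mul_of_mem_zero hx hx (S.pow_mem_zero hx (n + 1)), ih,
      mul_smul_comm, ← mul_assoc, ← pow_succ',
      ← ((S.commute_of_mem_zero hx (S.br 0 x x)).pow_left (n + 1)).eq]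
    match_scalars
    ring

theorem delta_pow_add_two {x : A} (hx : x ∈ S.grading 0) (n : ℕ) :
    S.delta (x ^ (n + 2)) = ((n + 2 : ℕ) : k) • (x ^ (n + 1) * S.delta x)
      + ((n + 2).choose 2 : k) • (x ^ n * S.br 0 x x) := by
  induction n with
  | zero =>
    rw [pow_two, S.delta_mul, ← (S.commute_of_mem_zero hx (S.delta x)).eq]
    simp only [zero_add, pow_one, pow_zero, one_mul, Nat.choose_self, Nat.cast_one, one_smul]
    module
  | succ n ih =>
    have hchoose : (n + 1 + 2).choose 2 = (n + 2).choose 2 + (n + 2) := by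
      rw [Nat.choose_succ_succ', Nat.choose_one_right, add_comm]
    rw [pow_succ' x (n + 2), S.delta_mul, ih, S.br_pow_succ hx, hchoose,
      ← ((S.commute_of_mem_zero hx (S.delta x)).pow_left (n + 2)).eq]
    simp only [mul_add, mul_smul_comm, ← mul_assoc, ← pow_succ', Nat.cast_add]
    module

theorem d_truncExp_succ {x : A} (hx : x ∈ S.grading 0) (n : ℕ) :
    S.d (truncExp k x (n + 1)) = truncExp k x n * S.d x := by
  induction n with
  | zero => simp [truncExp, S.d_one]
  | succ n ih =>
    rw [truncExp_succ, map_add, ih, map_smul, S.d_pow_succ hx, smul_smul, inv_factorial_succ_mul,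
      truncExp_succ, add_mul, smul_mul_assoc]

theorem delta_truncExp_add_two {x : A} (hx : x ∈ S.grading 0) (n : ℕ) :
    S.delta (truncExp k x (n + 2)) =
      truncExp k x (n + 1) * S.delta x + (2⁻¹ : k) • (truncExp k x n * S.br 0 x x) := by
  induction n with
  | zero => simp [truncExp, sum_range_succ, S.delta_one]
  | succ n ih =>
    rw [truncExp_succ, map_add, ih, map_smul, S.delta_pow_add_two hx, smul_add, smul_smul,
      smul_smul, inv_factorial_succ_mul, inv_factorial_add_two_mul_choose_two,
      truncExp_succ (n + 1), truncExp_succ n]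
    simp only [add_mul, smul_add, smul_mul_assoc, smul_smul]
    module

end DGBV

/-- In any dGBV algebra, for every even nilpotent element `S` (with `S^N = 0`) one has
`(d + Δ)(e^S) = (d(S) + Δ(S) + ½ [S • S]) ∘ e^S`, where `e^S = Σ_{r=0}^{N−1} Sʳ/r!`. -/
theorem dgbv_exp_master_formula {k A : Type*} [Field k] [CharZero k] [Ring A] [Algebra k A]
    (S : DGBV k A) (x : A) (hx : x ∈ S.grading 0) (N : ℕ) (hN : x ^ N = 0) :
    S.d (∑ r ∈ Finset.range N, (r.factorial : k)⁻¹ • x ^ r)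
      + S.delta (∑ r ∈ Finset.range N, (r.factorial : k)⁻¹ • x ^ r)
    = (S.d x + S.delta x + (2⁻¹ : k) • S.br 0 x x)
        * (∑ r ∈ Finset.range N, (r.factorial : k)⁻¹ • x ^ r) := by
  have hE (m : ℕ) : truncExp k x (N + m) = truncExp k x N :=
    truncExp_eq_of_pow_eq_zero hN (N.le_add_right m)
  change S.d (truncExp k x N) + S.delta (truncExp k x N) = _ * truncExp k x N
  calc S.d (truncExp k x N) + S.delta (truncExp k x N)
      = S.d (truncExp k x (N + 1)) + S.delta (truncExp k x (N + 2)) := by rw [hE, hE]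
    _ = truncExp k x N * (S.d x + S.delta x + (2⁻¹ : k) • S.br 0 x x) := by
      rw [S.d_truncExp_succ hx, S.delta_truncExp_add_two hx, hE, mul_add, mul_add, mul_smul_comm,
        add_assoc]
    _ = _ := ((S.commute_of_mem_zero hx _).truncExp_left N).eq
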